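/- Given n+1 points x₀, ..., xₙ in ℚⁿ with q(xᵢ − xⱼ) = 1 for all i ≠ j, where q is a rational quadratic form, the form q is rationally equivalent to Sₙ(x) = Σ_{i≤j} xᵢxⱼ. -/

import Mathlib

/-!
Put `vᵢ = xᵢ₊₁ - x₀`. Unit distances force `polar q vᵢ vⱼ = 1 + δᵢⱼ`, which is the polar matrix
of `Sₙ`, so `q (∑ aᵢ vᵢ) = Sₙ(a)`. Since `2 Sₙ(a) = (∑ aᵢ)² + ∑ aᵢ²`, the form `Sₙ` is
anisotropic, so the `vᵢ` are linearly independent and `T` is the coordinate map of the basis `v`.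
-/

/-- The quadratic form `Sₙ(x) = ∑_{1 ≤ i ≤ j ≤ n} xᵢ xⱼ` as a function. -/
def Sfun (n : ℕ) (x : Fin n → ℚ) : ℚ := ∑ i, ∑ j ∈ Finset.Ici i, x i * x j

open Finset

namespace QuadraticMap

variable {R M ι : Type*} [CommRing R] [AddCommGroup M] [Module R M]
  (q : QuadraticMap R M R)

theorem polar_eq_one_of_unit_triangle {u w : M} (hu : q u = 1) (hw : q w = 1)
    (huw : q (u - w) = 1) : polar q u w = 1 := by
  have h := polar_neg_right q u w
  rw [polar, ← sub_eq_add_neg, huw, hu, QuadraticMap.map_neg, hw] at h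
  linear_combination h

variable [DecidableEq ι] {q} {v : ι → M}

theorem polar_eq_one_add_ite_of_unit_simplex (hv : ∀ i, q (v i) = 1)
    (hvv : ∀ i j, i ≠ j → q (v i - v j) = 1) (i j : ι) :
    polar q (v i) (v j) = 1 + if i = j then 1 else 0 := by
  by_cases hij : i = j
  · subst hij
    rw [polar_self, hv, if_pos rfl]
    norm_num
  · rw [polar_eq_one_of_unit_triangle q (hv i) (hv j) (hvv i j hij), if_neg hij, add_zero]

theorem two_mul_map_sum_smul_of_unit_simplex [Fintype ι] (hv : ∀ i, q (v i) = 1)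
    (hvv : ∀ i j, i ≠ j → q (v i - v j) = 1) (a : ι → R) :
    2 * q (∑ i, a i • v i) = (∑ i, a i) ^ 2 + ∑ i, a i ^ 2 := by
  rw [two_mul, ← two_nsmul, ← polar_self, ← polarBilin_apply_apply]
  simp only [map_sum, map_smul, LinearMap.sum_apply, LinearMap.smul_apply, polarBilin_apply_apply,
    polar_eq_one_add_ite_of_unit_simplex hv hvv, smul_eq_mul, mul_add, mul_ite, mul_one, mul_zero,
    sum_add_distrib, sum_ite_eq', mem_univ, if_true]
  simp only [← sum_mul, pow_two]

end QuadraticMap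

theorem two_mul_sum_sum_Ici_mul {R ι : Type*} [CommRing R] [Fintype ι] [LinearOrder ι]
    [LocallyFiniteOrderTop ι] (a : ι → R) :
    2 * ∑ i, ∑ j ∈ Ici i, a i * a j = (∑ i, a i) ^ 2 + ∑ i, a i ^ 2 := by
  have hIci : ∑ i, ∑ j ∈ Ici i, a i * a j = ∑ i, ∑ j, if i ≤ j then a i * a j else 0 := by
    simp only [← sum_filter]
    congr! with i
    ext j
    simp
  have hswap : ∑ i, ∑ j ∈ Ici i, a i * a j = ∑ i, ∑ j, if j ≤ i then a i * a j else 0 := by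
    rw [hIci, sum_comm]
    simp_rw [mul_comm]
  have hsplit : ∀ i j, ((if i ≤ j then a i * a j else 0) + if j ≤ i then a i * a j else 0) =
      a i * a j + if i = j then a i * a j else 0 := by
    intro i j
    rcases lt_trichotomy i j with h | rfl | h
    · simp [h.le, h.not_ge, h.ne]
    · simp
    · simp [h.le, h.not_ge, h.ne']
  rw [two_mul]
  nth_rw 1 [hIci]
  rw [hswap, ← sum_add_distrib]
  simp_rw [← sum_add_distrib, hsplit, sum_add_distrib, sum_ite_eq, mem_univ, if_true, ← sum_mul_sum,
    sq]

theorem QuadraticForm.map_sum_smul_eq_Sfun_of_unit_simplex {V : Type*} [AddCommGroup V]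
    [Module ℚ V] {n : ℕ} {q : QuadraticForm ℚ V} {v : Fin n → V} (hv : ∀ i, q (v i) = 1)
    (hvv : ∀ i j, i ≠ j → q (v i - v j) = 1) (a : Fin n → ℚ) :
    q (∑ i, a i • v i) = Sfun n a := by
  have h := QuadraticMap.two_mul_map_sum_smul_of_unit_simplex hv hvv a
  rw [← two_mul_sum_sum_Ici_mul] at h
  exact mul_left_cancel₀ two_ne_zero h

theorem eq_zero_of_Sfun_eq_zero {n : ℕ} {a : Fin n → ℚ} (h : Sfun n a = 0) : a = 0 := by
  have h2 := two_mul_sum_sum_Ici_mul a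
  rw [← Sfun, h, mul_zero] at h2
  have hsq : ∑ i, a i ^ 2 = 0 := by
    linarith [sq_nonneg (∑ i, a i), sum_nonneg fun i (_ : i ∈ univ) => sq_nonneg (a i)]
  funext i
  exact pow_eq_zero_iff two_ne_zero |>.mp <|
    (sum_eq_zero_iff_of_nonneg fun i _ => sq_nonneg (a i)).mp hsq i (mem_univ i)

theorem stmt_10_general {n : ℕ} (q : QuadraticForm ℚ (Fin n → ℚ))
    (x : Fin (n + 1) → (Fin n → ℚ)) (hx : ∀ i j, i ≠ j → q (x i - x j) = 1) :
    ∃ T : (Fin n → ℚ) ≃ₗ[ℚ] (Fin n → ℚ), ∀ z, q z = Sfun n (T z) := by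
  set v : Fin n → (Fin n → ℚ) := fun i => x i.succ - x 0
  have hv : ∀ i, q (v i) = 1 := fun i => hx _ _ i.succ_ne_zero
  have hvv : ∀ i j, i ≠ j → q (v i - v j) = 1 := fun i j hij => by
    rw [sub_sub_sub_cancel_right]
    exact hx _ _ ((Fin.succ_injective n).ne hij)
  set L := Fintype.linearCombination ℚ v
  have hL : ∀ a, q (L a) = Sfun n a := fun a => by
    rw [Fintype.linearCombination_apply]
    exact q.map_sum_smul_eq_Sfun_of_unit_simplex hv hvv a
  have hL_inj : Function.Injective L := by
    refine (injective_iff_map_eq_zero L).mpr fun a ha => eq_zero_of_Sfun_eq_zero ?_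
    rw [← hL, ha, map_zero]
  set T := LinearEquiv.ofInjectiveEndo L hL_inj
  refine ⟨T.symm, fun z => ?_⟩
  rw [← hL]
  exact congrArg q (T.apply_symm_apply z).symm

/-- If `n + 1` points of `ℚⁿ` are pairwise at unit `q`-distance, then `q` is
rationally equivalent to `Sₙ`. -/
theorem stmt_10 {n : ℕ} (q : QuadraticForm ℚ (Fin n → ℚ)) (hq : q.PosDef)
    (x : Fin (n + 1) → (Fin n → ℚ)) (hx : ∀ i j, i ≠ j → q (x i - x j) = 1) :
    ∃ T : (Fin n → ℚ) ≃ₗ[ℚ] (Fin n → ℚ), ∀ z, q z = Sfun n (T z) :=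
  stmt_10_general q x hx
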